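/- Fix γ > 0 and a distribution F₀ on [0,∞) with F₀ ∈ OS and ∫₀^∞ F̄₀(y)dy = ∞, and define F_γ by F̄_γ(x) = e^{-γx}F̄₀(x) for x ≥ 0. Then (F_γ^{*2})̄(x) ~ γ e^{-γx} ∫₀ˣ F̄₀(x-y)F̄₀(y) dy as x → ∞. -/

import Mathlib

open MeasureTheory Filter Set Asymptotics

/-- The tail `F̄(x) = μ((x,∞))` of a distribution `μ` on `ℝ`. -/
noncomputable def tail (μ : MeasureTheory.Measure ℝ) (x : ℝ) : ℝ := (μ (Set.Ioi x)).toReal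

/-- Convolution of two distributions on `ℝ`. -/
noncomputable def mconv (μ ν : MeasureTheory.Measure ℝ) : MeasureTheory.Measure ℝ :=
  MeasureTheory.Measure.map (fun p : ℝ × ℝ => p.1 + p.2) (μ.prod ν)

/-- `iconv μ k` is the `k`-fold convolution `μ^{*k}` (with `μ^{*0} = δ₀`). -/
noncomputable def iconv (μ : MeasureTheory.Measure ℝ) : ℕ → MeasureTheory.Measure ℝ
  | 0 => MeasureTheory.Measure.dirac 0
  | n + 1 => mconv (iconv μ n) μ

/-- The class `L(γ)`: `F̄(x-t) ~ e^{γt} F̄(x)` as `x → ∞`, for every `t`. -/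
def MemL (γ : ℝ) (μ : MeasureTheory.Measure ℝ) : Prop :=
  ∀ t : ℝ, Filter.Tendsto (fun x => tail μ (x - t) / tail μ x) Filter.atTop
    (nhds (Real.exp (γ * t)))

/-- The class `OS`: `limsup_{x→∞} (F*F)̄(x) / F̄(x) < ∞`. -/
def MemOS (μ : MeasureTheory.Measure ℝ) : Prop :=
  Filter.IsBoundedUnder (· ≤ ·) Filter.atTop (fun x => tail (mconv μ μ) x / tail μ x)

/-!
Let `ν` be the law of `min X E`, where `X ∼ F₀` and `E ∼ Exp(γ)` are independent. Then
`ν(t, ∞) = e^{-γt} F̄₀(t)` for `t ≥ 0`, so `ν` and `F_γ` agree on `(0, ∞)`; removing the mass on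
`(-∞, 0]` changes the tail of a self-convolution by at most twice the tail, so
`(F_γ * F_γ)̄(x) = (ν * ν)̄(x) + O(e^{-γx} F̄₀(x))`. Splitting the second summand `min X' E'`
according to which of `X'`, `E'` is smaller gives
`(ν * ν)̄(x) = γ e^{-γx} ∫₀ˣ F̄₀(x-y) F̄₀(y) dy + O(e^{-γx} ((F₀ * F₀)̄(x) + F̄₀(x)))`.
Since `F₀ ∈ OS`, all error terms are `O(e^{-γx} F̄₀(x))`, whereas the main term is at least
`γ e^{-γx} F̄₀(x) ∫₀ˣ F̄₀`, and `∫₀ˣ F̄₀ → ∞`.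
-/

open scoped ENNReal
open ProbabilityTheory

lemma tail_nonneg (μ : Measure ℝ) (x : ℝ) : 0 ≤ tail μ x := ENNReal.toReal_nonneg

lemma tail_le_one (μ : Measure ℝ) [IsProbabilityMeasure μ] (x : ℝ) : tail μ x ≤ 1 :=
  measureReal_le_one

lemma antitone_tail (μ : Measure ℝ) [IsFiniteMeasure μ] : Antitone (tail μ) :=
  fun _ _ hab => ENNReal.toReal_mono (measure_ne_top μ _) (measure_mono (Ioi_subset_Ioi hab))

lemma ofReal_tail (μ : Measure ℝ) [IsFiniteMeasure μ] (x : ℝ) :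
    ENNReal.ofReal (tail μ x) = μ (Ioi x) :=
  ENNReal.ofReal_toReal (measure_ne_top μ _)

lemma integrableOn_tail (μ : Measure ℝ) [IsProbabilityMeasure μ] (a b : ℝ) :
    IntegrableOn (tail μ) (Ioc a b) :=
  Measure.integrableOn_of_bounded measure_Ioc_lt_top.ne
    (antitone_tail μ).measurable.aestronglyMeasurable
    (Eventually.of_forall fun y => by
      rw [Real.norm_of_nonneg (tail_nonneg μ y)]; exact tail_le_one μ y)

lemma integrableOn_tail_sub_mul_tail (μ : Measure ℝ) [IsProbabilityMeasure μ] (x : ℝ) :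
    IntegrableOn (fun y => tail μ (x - y) * tail μ y) (Ioc 0 x) := by
  refine (integrableOn_tail μ 0 x).bdd_mul (c := 1)
    (Monotone.measurable fun a b (hab : a ≤ b) =>
      antitone_tail μ (by linarith : x - b ≤ x - a)).aestronglyMeasurable
    (Eventually.of_forall fun y => ?_)
  rw [Real.norm_of_nonneg (tail_nonneg μ _)]; exact tail_le_one μ _

lemma integral_tail_sub_mul_tail_nonneg (μ : Measure ℝ) (x : ℝ) :
    0 ≤ ∫ y in Ioc 0 x, tail μ (x - y) * tail μ y :=
  setIntegral_nonneg measurableSet_Ioc fun y _ => mul_nonneg (tail_nonneg μ _) (tail_nonneg μ y)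

lemma tail_mul_integral_le_integral_tail_sub_mul_tail (μ : Measure ℝ) [IsProbabilityMeasure μ]
    (x : ℝ) : tail μ x * ∫ y in Ioc 0 x, tail μ y ≤ ∫ y in Ioc 0 x, tail μ (x - y) * tail μ y := by
  rw [← integral_const_mul]
  refine setIntegral_mono_on ((integrableOn_tail μ 0 x).const_mul _)
    (integrableOn_tail_sub_mul_tail μ x) measurableSet_Ioc fun y hy => ?_
  exact mul_le_mul_of_nonneg_right (antitone_tail μ (by linarith [hy.1])) (tail_nonneg μ y)

lemma tail_pos_of_tendsto_integral (μ : Measure ℝ) [IsProbabilityMeasure μ]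
    (hdiv : Tendsto (fun x => ∫ y in Ioc 0 x, tail μ y) atTop atTop) (z : ℝ) : 0 < tail μ z := by
  by_contra! hz
  set z' := max z 0
  have hconst : ∀ x ≥ z', ∫ y in Ioc 0 x, tail μ y = ∫ y in Ioc 0 z', tail μ y := by
    intro x hx
    rw [← Ioc_union_Ioc_eq_Ioc (le_max_right z 0) hx, setIntegral_union
      (Ioc_disjoint_Ioc_of_le le_rfl) measurableSet_Ioc (integrableOn_tail μ _ _)
      (integrableOn_tail μ _ _), add_eq_left]
    exact setIntegral_eq_zero_of_forall_eq_zero fun y hy => le_antisymm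
      ((antitone_tail μ ((le_max_left z 0).trans hy.1.le)).trans hz) (tail_nonneg μ y)
  obtain ⟨x, hx, hlarge⟩ := ((eventually_ge_atTop z').and
    (hdiv.eventually_gt_atTop (∫ y in Ioc 0 z', tail μ y))).exists
  exact (hconst x hx).not_gt hlarge

lemma MemOS.isBigO {μ : Measure ℝ} (hμ : MemOS μ) (hpos : ∀ x, 0 < tail μ x) :
    tail (mconv μ μ) =O[atTop] tail μ := by
  obtain ⟨C, hC⟩ := hμ
  refine IsBigO.of_bound C ?_
  filter_upwards [eventually_map.1 hC] with x hx
  rw [Real.norm_of_nonneg (tail_nonneg _ x), Real.norm_of_nonneg (tail_nonneg _ x)]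
  exact (div_le_iff₀ (hpos x)).1 hx

lemma mconv_eq_conv (μ ν : Measure ℝ) : mconv μ ν = μ ∗ ν := rfl

instance (μ ν : Measure ℝ) [IsProbabilityMeasure μ] [IsProbabilityMeasure ν] :
    IsProbabilityMeasure (mconv μ ν) :=
  inferInstanceAs (IsProbabilityMeasure (μ ∗ ν))

lemma measurable_measure_Ioi_sub (ν : Measure ℝ) (x : ℝ) :
    Measurable fun y => ν (Ioi (x - y)) :=
  Monotone.measurable fun _ _ hab => measure_mono (Ioi_subset_Ioi (by linarith))

lemma conv_apply_Ioi (μ ν : Measure ℝ) [SFinite ν] (x : ℝ) :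
    (μ ∗ ν) (Ioi x) = ∫⁻ y, ν (Ioi (x - y)) ∂μ := by
  rw [← lintegral_indicator_one measurableSet_Ioi,
    Measure.lintegral_conv (measurable_one.indicator measurableSet_Ioi)]
  congr 1 with y
  rw [← lintegral_indicator_one measurableSet_Ioi]
  congr 1 with z
  simp only [indicator, mem_Ioi, sub_lt_iff_lt_add', Pi.one_apply]

lemma conv_restrict_Iic_zero_apply_Ioi_le (μ ν : Measure ℝ) [IsProbabilityMeasure μ] [SFinite ν]
    (x : ℝ) : (μ.restrict (Iic 0) ∗ ν) (Ioi x) ≤ ν (Ioi x) := by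
  rw [conv_apply_Ioi]
  calc ∫⁻ y in Iic 0, ν (Ioi (x - y)) ∂μ ≤ ∫⁻ _ in Iic 0, ν (Ioi x) ∂μ :=
        setLIntegral_mono' measurableSet_Iic fun y (hy : y ≤ 0) =>
          measure_mono (Ioi_subset_Ioi (by linarith))
    _ = ν (Ioi x) * μ (Iic 0) := setLIntegral_const _ _
    _ ≤ ν (Ioi x) := mul_le_of_le_one_right' prob_le_one

lemma conv_mono {μ μ' ν ν' : Measure ℝ} [SFinite ν] [SFinite ν'] (hμ : μ ≤ μ') (hν : ν ≤ ν') :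
    μ ∗ ν ≤ μ' ∗ ν' :=
  Measure.map_mono (Measure.prod_mono hμ hν) measurable_add

lemma conv_self_apply_Ioi_le_of_restrict_eq (μ ν : Measure ℝ) [IsProbabilityMeasure μ]
    [SFinite ν] (h : μ.restrict (Ioi 0) = ν.restrict (Ioi 0)) (x : ℝ) :
    (μ ∗ μ) (Ioi x) ≤ (ν ∗ ν) (Ioi x) + 2 * μ (Ioi x) := by
  set μp := μ.restrict (Ioi 0)
  set μn := μ.restrict (Iic 0)
  have hμ : μp + μn = μ := by
    simpa only [compl_Ioi] using
      Measure.restrict_add_restrict_compl (μ := μ) (measurableSet_Ioi (a := 0))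
  have hsplit : μ ∗ μ = μp ∗ μp + μn ∗ μp + μn ∗ μ :=
    calc μ ∗ μ = (μp + μn) ∗ μ := by rw [hμ]
      _ = μp ∗ (μp + μn) + μn ∗ μ := by rw [Measure.add_conv, hμ]
      _ = _ := by rw [Measure.conv_add, Measure.conv_comm μp μn]
  have hp : (μp ∗ μp) (Ioi x) ≤ (ν ∗ ν) (Ioi x) := by
    rw [h]; exact conv_mono Measure.restrict_le_self Measure.restrict_le_self _
  rw [hsplit, Measure.add_apply, Measure.add_apply, two_mul, ← add_assoc]
  exact add_le_add (add_le_add hp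
    ((conv_restrict_Iic_zero_apply_Ioi_le μ μp x).trans (Measure.restrict_le_self _)))
    (conv_restrict_Iic_zero_apply_Ioi_le μ μ x)

lemma restrict_Ioi_zero_eq_of_measure_Ioi_eq (μ ν : Measure ℝ) [IsFiniteMeasure μ]
    (h : ∀ t, 0 ≤ t → μ (Ioi t) = ν (Ioi t)) : μ.restrict (Ioi 0) = ν.restrict (Ioi 0) := by
  refine ext_of_generate_finite _ (BorelSpace.measurable_eq.trans (borel_eq_generateFrom_Ioi ℝ))
    isPiSystem_Ioi ?_ ?_
  · rintro _ ⟨t, rfl⟩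
    rw [Measure.restrict_apply measurableSet_Ioi, Measure.restrict_apply measurableSet_Ioi,
      Ioi_inter_Ioi, h _ (le_max_right t 0)]
  · rw [Measure.restrict_apply_univ, Measure.restrict_apply_univ, h 0 le_rfl]

lemma tail_conv_self_le_of_restrict_eq (μ ν : Measure ℝ) [IsProbabilityMeasure μ]
    [IsProbabilityMeasure ν] (h : μ.restrict (Ioi 0) = ν.restrict (Ioi 0)) (x : ℝ) :
    tail (mconv μ μ) x ≤ tail (mconv ν ν) x + 2 * tail μ x := by
  have h2 : (2 * μ (Ioi x)).toReal = 2 * tail μ x := by simp [tail]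
  rw [tail, tail, mconv_eq_conv, mconv_eq_conv, ← h2]
  exact ENNReal.toReal_le_add (conv_self_apply_Ioi_le_of_restrict_eq μ ν h x)
    (measure_ne_top _ _) (ENNReal.mul_ne_top ENNReal.ofNat_ne_top (measure_ne_top _ _))

section Exponential

variable {γ : ℝ}

instance (γ : ℝ) : NullSingletonClass (expMeasure γ) := by
  unfold expMeasure gammaMeasure; infer_instance

instance (γ : ℝ) : SFinite (expMeasure γ) := by
  unfold expMeasure gammaMeasure; infer_instance

lemma expMeasure_Iic (hγ : 0 < γ) {t : ℝ} (ht : 0 ≤ t) :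
    expMeasure γ (Iic t) = ENNReal.ofReal (1 - Real.exp (-(γ * t))) := by
  have := isProbabilityMeasure_expMeasure hγ
  rw [← ofReal_cdf, cdf_expMeasure_eq hγ, if_pos ht]

lemma expMeasure_Iic_zero (hγ : 0 < γ) : expMeasure γ (Iic 0) = 0 := by
  simp [expMeasure_Iic hγ le_rfl]

lemma expMeasure_Ioi (hγ : 0 < γ) {t : ℝ} (ht : 0 ≤ t) :
    expMeasure γ (Ioi t) = ENNReal.ofReal (Real.exp (-(γ * t))) := by
  have := isProbabilityMeasure_expMeasure hγ
  have hexp : Real.exp (-(γ * t)) ≤ 1 := Real.exp_le_one_iff.2 (by nlinarith)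
  rw [← compl_Iic, prob_compl_eq_one_sub measurableSet_Iic, expMeasure_Iic hγ ht,
    ← ENNReal.ofReal_one, ← ENNReal.ofReal_sub _ (sub_nonneg.2 hexp), sub_sub_cancel]

lemma expMeasure_Ici_le (hγ : 0 < γ) (t : ℝ) :
    expMeasure γ (Ici t) ≤ ENNReal.ofReal (Real.exp (-(γ * t))) := by
  have := isProbabilityMeasure_expMeasure hγ
  rcases le_or_gt 0 t with ht | ht
  · rw [← measure_congr Ioi_ae_eq_Ici, expMeasure_Ioi hγ ht]
  · exact prob_le_one.trans (ENNReal.one_le_ofReal.2 (Real.one_le_exp (by nlinarith)))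

lemma expMeasure_Ioi_le (hγ : 0 < γ) (t : ℝ) :
    expMeasure γ (Ioi t) ≤ ENNReal.ofReal (Real.exp (-(γ * t))) :=
  (measure_mono Ioi_subset_Ici_self).trans (expMeasure_Ici_le hγ t)

lemma setLIntegral_Ioc_expMeasure {f : ℝ → ℝ≥0∞} (hf : Measurable f) (x : ℝ) :
    ∫⁻ e in Ioc 0 x, f e ∂expMeasure γ =
      ∫⁻ e in Ioc 0 x, ENNReal.ofReal (γ * Real.exp (-(γ * e))) * f e := by
  rw [expMeasure, gammaMeasure, setLIntegral_withDensity_eq_setLIntegral_mul _ (f := gammaPDF 1 γ)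
    (measurable_gammaPDFReal 1 γ).ennreal_ofReal hf measurableSet_Ioc]
  refine setLIntegral_congr_fun measurableSet_Ioc fun e he => ?_
  exact congrArg (· * f e) (exponentialPDF_of_nonneg he.1.le)

end Exponential

noncomputable def minLaw (μ ν : Measure ℝ) : Measure ℝ :=
  (μ.prod ν).map fun p => min p.1 p.2

instance (μ ν : Measure ℝ) [IsProbabilityMeasure μ] [IsProbabilityMeasure ν] :
    IsProbabilityMeasure (minLaw μ ν) :=
  Measure.isProbabilityMeasure_map (by fun_prop)

instance (μ ν : Measure ℝ) [SFinite μ] [SFinite ν] : SFinite (minLaw μ ν) := by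
  unfold minLaw; infer_instance

lemma minLaw_apply_Ioi (μ ν : Measure ℝ) [SFinite ν] (t : ℝ) :
    minLaw μ ν (Ioi t) = μ (Ioi t) * ν (Ioi t) := by
  rw [minLaw, Measure.map_apply (by fun_prop) measurableSet_Ioi, ← Measure.prod_prod]
  congr 1 with p
  simp

lemma lintegral_minLaw (μ ν : Measure ℝ) [SFinite μ] [SFinite ν] {φ : ℝ → ℝ≥0∞}
    (hφ : Measurable φ) :
    ∫⁻ y, φ y ∂minLaw μ ν = ∫⁻ x, φ x * ν (Ici x) ∂μ + ∫⁻ y, φ y * μ (Ioi y) ∂ν := by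
  have hsplit : ∀ p : ℝ × ℝ, φ (min p.1 p.2) =
      {p | p.1 ≤ p.2}.indicator (fun p => φ p.1) p +
        {p | p.2 < p.1}.indicator (fun p => φ p.2) p := by
    rintro ⟨a, b⟩
    rcases le_or_gt a b with h | h
    · simp [h, h.not_gt]
    · simp [h, h.not_ge, h.le]
  have h₁ : Measurable ({p : ℝ × ℝ | p.1 ≤ p.2}.indicator fun p => φ p.1) :=
    (hφ.comp measurable_fst).indicator (measurableSet_le measurable_fst measurable_snd)
  have h₂ : Measurable ({p : ℝ × ℝ | p.2 < p.1}.indicator fun p => φ p.2) :=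
    (hφ.comp measurable_snd).indicator (measurableSet_lt measurable_snd measurable_fst)
  rw [minLaw, lintegral_map hφ (by fun_prop), funext hsplit, lintegral_add_left h₁,
    lintegral_prod _ h₁.aemeasurable, lintegral_prod_symm _ h₂.aemeasurable]
  congr 1
  · congr 1 with a
    exact lintegral_indicator_const measurableSet_Ici (φ a)
  · congr 1 with b
    exact lintegral_indicator_const measurableSet_Ioi (φ b)

lemma minLaw_expMeasure_apply_Ioi (μ : Measure ℝ) {γ : ℝ} (hγ : 0 < γ) {t : ℝ} (ht : 0 ≤ t) :
    minLaw μ (expMeasure γ) (Ioi t) = μ (Ioi t) * ENNReal.ofReal (Real.exp (-(γ * t))) := by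
  rw [minLaw_apply_Ioi, expMeasure_Ioi hγ ht]

section MinExp

variable {γ : ℝ} (μ : Measure ℝ) [IsProbabilityMeasure μ]

lemma lintegral_Ioc_minLaw_expMeasure (hγ : 0 < γ) (x : ℝ) :
    ∫⁻ e in Ioc 0 x, minLaw μ (expMeasure γ) (Ioi (x - e)) * μ (Ioi e) ∂expMeasure γ =
      ENNReal.ofReal (γ * Real.exp (-(γ * x)) * ∫ y in Ioc 0 x, tail μ (x - y) * tail μ y) := by
  have hint := integrableOn_tail_sub_mul_tail μ x
  have hm : Measurable fun e => minLaw μ (expMeasure γ) (Ioi (x - e)) * μ (Ioi e) :=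
    (measurable_measure_Ioi_sub _ x).mul
      (Antitone.measurable fun _ _ hab => measure_mono (Ioi_subset_Ioi hab))
  rw [setLIntegral_Ioc_expMeasure hm,
    ← integral_const_mul, ofReal_integral_eq_lintegral_ofReal (hint.const_mul _)
      (ae_restrict_of_forall_mem measurableSet_Ioc fun y _ =>
        mul_nonneg (by positivity) (mul_nonneg (tail_nonneg μ _) (tail_nonneg μ y)))]
  refine setLIntegral_congr_fun measurableSet_Ioc fun e he => ?_
  have hexp : Real.exp (-(γ * x)) = Real.exp (-(γ * (x - e))) * Real.exp (-(γ * e)) := by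
    rw [← Real.exp_add]; ring_nf
  rw [minLaw_expMeasure_apply_Ioi μ hγ (sub_nonneg.2 he.2), ← ofReal_tail, ← ofReal_tail,
    ← ENNReal.ofReal_mul (tail_nonneg μ _),
    ← ENNReal.ofReal_mul (mul_nonneg (tail_nonneg μ _) (Real.exp_nonneg _)),
    ← ENNReal.ofReal_mul (by positivity : 0 ≤ γ * Real.exp (-(γ * e))), hexp]
  congr 1
  ring

lemma conv_minLaw_expMeasure_apply_Ioi (x : ℝ) :
    (minLaw μ (expMeasure γ) ∗ minLaw μ (expMeasure γ)) (Ioi x) =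
      ∫⁻ y, minLaw μ (expMeasure γ) (Ioi (x - y)) * expMeasure γ (Ici y) ∂μ +
        ∫⁻ e, minLaw μ (expMeasure γ) (Ioi (x - e)) * μ (Ioi e) ∂expMeasure γ := by
  rw [conv_apply_Ioi, lintegral_minLaw _ _ (measurable_measure_Ioi_sub _ x)]

lemma lintegral_minLaw_expMeasure_mul_Ici_le (hγ : 0 < γ) (x : ℝ) :
    ∫⁻ y, minLaw μ (expMeasure γ) (Ioi (x - y)) * expMeasure γ (Ici y) ∂μ ≤
      ENNReal.ofReal (Real.exp (-(γ * x))) * (μ ∗ μ) (Ioi x) := by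
  rw [conv_apply_Ioi, ← lintegral_const_mul _ (measurable_measure_Ioi_sub μ x)]
  refine lintegral_mono fun y => ?_
  have hexp : Real.exp (-(γ * (x - y))) * Real.exp (-(γ * y)) = Real.exp (-(γ * x)) := by
    rw [← Real.exp_add]; ring_nf
  calc minLaw μ (expMeasure γ) (Ioi (x - y)) * expMeasure γ (Ici y)
      = μ (Ioi (x - y)) * expMeasure γ (Ioi (x - y)) * expMeasure γ (Ici y) := by
        rw [minLaw_apply_Ioi]
    _ ≤ μ (Ioi (x - y)) * ENNReal.ofReal (Real.exp (-(γ * (x - y)))) *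
          ENNReal.ofReal (Real.exp (-(γ * y))) := by
        gcongr
        exacts [expMeasure_Ioi_le hγ _, expMeasure_Ici_le hγ y]
    _ = ENNReal.ofReal (Real.exp (-(γ * x))) * μ (Ioi (x - y)) := by
        rw [mul_assoc, ← ENNReal.ofReal_mul (Real.exp_nonneg _), hexp, mul_comm]

lemma lintegral_minLaw_expMeasure_mul_Ioi_le (hγ : 0 < γ) (x : ℝ) :
    ∫⁻ e, minLaw μ (expMeasure γ) (Ioi (x - e)) * μ (Ioi e) ∂expMeasure γ ≤
      ∫⁻ e in Ioc 0 x, minLaw μ (expMeasure γ) (Ioi (x - e)) * μ (Ioi e) ∂expMeasure γ +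
        ENNReal.ofReal (Real.exp (-(γ * x))) * μ (Ioi x) := by
  have := isProbabilityMeasure_expMeasure hγ
  have hpos : (expMeasure γ).restrict (Ioi 0) = expMeasure γ :=
    Measure.restrict_eq_self_of_ae_mem
      (ae_iff.2 (measure_mono_null (fun a (ha : ¬ 0 < a) => not_lt.1 ha) (expMeasure_Iic_zero hγ)))
  have htail : ∫⁻ e in Ioi x, minLaw μ (expMeasure γ) (Ioi (x - e)) * μ (Ioi e) ∂expMeasure γ ≤
      ENNReal.ofReal (Real.exp (-(γ * x))) * μ (Ioi x) :=
    calc _ ≤ ∫⁻ _ in Ioi x, μ (Ioi x) ∂expMeasure γ :=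
          setLIntegral_mono' measurableSet_Ioi fun e (he : x < e) =>
            (mul_le_mul' prob_le_one (measure_mono (Ioi_subset_Ioi he.le))).trans_eq (one_mul _)
      _ ≤ _ := by
          rw [setLIntegral_const, mul_comm]; gcongr; exact expMeasure_Ioi_le hγ x
  calc _ = ∫⁻ e in Ioi 0, minLaw μ (expMeasure γ) (Ioi (x - e)) * μ (Ioi e) ∂expMeasure γ := by
        rw [hpos]
    _ ≤ ∫⁻ e in Ioc 0 x ∪ Ioi x, minLaw μ (expMeasure γ) (Ioi (x - e)) * μ (Ioi e) ∂expMeasure γ :=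
        lintegral_mono_set fun e (he : 0 < e) => (le_or_gt e x).imp (fun h => ⟨he, h⟩) id
    _ ≤ _ := (lintegral_union_le _ _ _).trans (add_le_add le_rfl htail)

lemma le_tail_conv_minLaw_expMeasure (hγ : 0 < γ) (x : ℝ) :
    γ * Real.exp (-(γ * x)) * ∫ y in Ioc 0 x, tail μ (x - y) * tail μ y ≤
      tail (mconv (minLaw μ (expMeasure γ)) (minLaw μ (expMeasure γ))) x := by
  have := isProbabilityMeasure_expMeasure hγ
  rw [tail, mconv_eq_conv, ← ENNReal.ofReal_le_iff_le_toReal (measure_ne_top _ _),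
    ← lintegral_Ioc_minLaw_expMeasure μ hγ x, conv_minLaw_expMeasure_apply_Ioi]
  exact (setLIntegral_le_lintegral _ _).trans le_add_self

lemma tail_conv_minLaw_expMeasure_le (hγ : 0 < γ) (x : ℝ) :
    tail (mconv (minLaw μ (expMeasure γ)) (minLaw μ (expMeasure γ))) x ≤
      γ * Real.exp (-(γ * x)) * (∫ y in Ioc 0 x, tail μ (x - y) * tail μ y) +
        Real.exp (-(γ * x)) * (tail (mconv μ μ) x + tail μ x) := by
  have := isProbabilityMeasure_expMeasure hγ
  have hM := mul_nonneg (by positivity : 0 ≤ γ * Real.exp (-(γ * x)))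
    (integral_tail_sub_mul_tail_nonneg μ x)
  have hE : 0 ≤ Real.exp (-(γ * x)) * (tail (mconv μ μ) x + tail μ x) :=
    mul_nonneg (Real.exp_nonneg _) (add_nonneg (tail_nonneg _ x) (tail_nonneg _ x))
  rw [tail, mconv_eq_conv]
  refine ENNReal.toReal_le_of_le_ofReal (add_nonneg hM hE) ?_
  rw [ENNReal.ofReal_add hM hE, ← lintegral_Ioc_minLaw_expMeasure μ hγ x,
    ENNReal.ofReal_mul (Real.exp_nonneg _), ENNReal.ofReal_add (tail_nonneg _ x) (tail_nonneg _ x),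
    ofReal_tail, ofReal_tail, mconv_eq_conv, conv_minLaw_expMeasure_apply_Ioi]
  refine (add_le_add (lintegral_minLaw_expMeasure_mul_Ici_le μ hγ x)
    (lintegral_minLaw_expMeasure_mul_Ioi_le μ hγ x)).trans_eq ?_
  ring

end MinExp

lemma abs_tail_conv_sub_le {γ : ℝ} (hγ : 0 < γ) (F0 Fγ : Measure ℝ) [IsProbabilityMeasure F0]
    [IsProbabilityMeasure Fγ] (ht : ∀ x : ℝ, 0 ≤ x → tail Fγ x = Real.exp (-(γ * x)) * tail F0 x)
    {x : ℝ} (hx : 0 ≤ x) :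
    |tail (mconv Fγ Fγ) x - γ * Real.exp (-(γ * x)) * ∫ y in Ioc 0 x, tail F0 (x - y) * tail F0 y|
      ≤ Real.exp (-(γ * x)) * (3 * tail F0 x + tail (mconv F0 F0) x) := by
  have := isProbabilityMeasure_expMeasure hγ
  set ν := minLaw F0 (expMeasure γ)
  have hν : ∀ t, 0 ≤ t → tail ν t = Real.exp (-(γ * t)) * tail F0 t := fun t ht' => by
    rw [tail, minLaw_expMeasure_apply_Ioi F0 hγ ht', ENNReal.toReal_mul, ENNReal.toReal_ofReal
      (Real.exp_nonneg _), mul_comm, tail]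
  have hres : Fγ.restrict (Ioi 0) = ν.restrict (Ioi 0) :=
    restrict_Ioi_zero_eq_of_measure_Ioi_eq _ _ fun t ht' => by
      rw [← ofReal_tail, ← ofReal_tail, ht t ht', hν t ht']
  have h₁ := tail_conv_self_le_of_restrict_eq Fγ ν hres x
  have h₂ := tail_conv_self_le_of_restrict_eq ν Fγ hres.symm x
  have h₃ := le_tail_conv_minLaw_expMeasure F0 hγ x
  have h₄ := tail_conv_minLaw_expMeasure_le F0 hγ x
  rw [ht x hx] at h₁
  rw [hν x hx] at h₂
  rw [abs_sub_le_iff]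
  constructor <;> linarith

lemma isLittleO_of_mul_le_of_tendsto_atTop {α : Type*} {l : Filter α} {f g h : α → ℝ}
    (hf : ∀ᶠ x in l, 0 ≤ f x) (hg : Tendsto g l atTop) (hfg : ∀ᶠ x in l, f x * g x ≤ h x) :
    f =o[l] h := by
  refine isLittleO_iff.2 fun c hc => ?_
  filter_upwards [hf, hfg, hg.eventually_ge_atTop c⁻¹] with x hfx hfgx hgx
  rw [Real.norm_of_nonneg hfx, Real.norm_eq_abs]
  calc f x = c * (f x * c⁻¹) := by field_simp
    _ ≤ c * (f x * g x) := by gcongr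
    _ ≤ c * |h x| := by gcongr; exact hfgx.trans (le_abs_self _)

theorem stmt15_general (γ : ℝ) (hγ : 0 < γ) (F0 Fγ : Measure ℝ)
    [IsProbabilityMeasure F0] [IsProbabilityMeasure Fγ]
    (hOS : MemOS F0)
    (hdiv : Filter.Tendsto (fun x : ℝ => ∫ y in Set.Ioc 0 x, tail F0 y)
      Filter.atTop Filter.atTop)
    (ht : ∀ x : ℝ, 0 ≤ x → tail Fγ x = Real.exp (-(γ * x)) * tail F0 x) :
    (fun x => tail (mconv Fγ Fγ) x) ~[Filter.atTop]
      fun x => γ * Real.exp (-(γ * x)) * ∫ y in Set.Ioc 0 x, tail F0 (x - y) * tail F0 y := by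
  have hbound : (fun x => tail (mconv Fγ Fγ) x -
      γ * Real.exp (-(γ * x)) * ∫ y in Ioc 0 x, tail F0 (x - y) * tail F0 y) =O[atTop]
      fun x => Real.exp (-(γ * x)) * (3 * tail F0 x + tail (mconv F0 F0) x) := by
    refine IsBigO.of_bound 1 ?_
    filter_upwards [eventually_ge_atTop 0] with x hx
    rw [one_mul, Real.norm_eq_abs, Real.norm_of_nonneg (mul_nonneg (Real.exp_nonneg _)
      (add_nonneg (mul_nonneg zero_le_three (tail_nonneg F0 x)) (tail_nonneg _ x)))]
    exact abs_tail_conv_sub_le hγ F0 Fγ ht hx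
  have herr := hbound.trans ((isBigO_refl (fun x => Real.exp (-(γ * x))) atTop).mul
    (((isBigO_refl (tail F0) atTop).const_mul_left 3).add
      (hOS.isBigO (tail_pos_of_tendsto_integral F0 hdiv))))
  refine herr.trans_isLittleO (isLittleO_of_mul_le_of_tendsto_atTop
    (Eventually.of_forall fun x => mul_nonneg (Real.exp_nonneg _) (tail_nonneg F0 x))
    (hdiv.const_mul_atTop hγ) (Eventually.of_forall fun x => ?_))
  calc Real.exp (-(γ * x)) * tail F0 x * (γ * ∫ y in Ioc 0 x, tail F0 y)
      = γ * Real.exp (-(γ * x)) * (tail F0 x * ∫ y in Ioc 0 x, tail F0 y) := by ring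
    _ ≤ _ := by gcongr; exact tail_mul_integral_le_integral_tail_sub_mul_tail F0 x

theorem stmt15 (γ : ℝ) (hγ : 0 < γ) (F0 Fγ : Measure ℝ)
    [IsProbabilityMeasure F0] [IsProbabilityMeasure Fγ]
    (hs : F0 (Set.Iio 0) = 0) (hOS : MemOS F0)
    (hdiv : Filter.Tendsto (fun x : ℝ => ∫ y in Set.Ioc 0 x, tail F0 y)
      Filter.atTop Filter.atTop)
    (ht : ∀ x : ℝ, 0 ≤ x → tail Fγ x = Real.exp (-(γ * x)) * tail F0 x) :
    (fun x => tail (mconv Fγ Fγ) x) ~[Filter.atTop]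
      fun x => γ * Real.exp (-(γ * x)) * ∫ y in Set.Ioc 0 x, tail F0 (x - y) * tail F0 y :=
  stmt15_general γ hγ F0 Fγ hOS hdiv ht
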